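/- arXiv:math/0405117 — 2 statements merged into one kernel-verified Lean document; each statement's English description precedes it below -/
import Mathlib

section
/- Let R be a Dedekind domain with countably generated quotient field Q, and let B be a torsion-free reduced R-module. Suppose M = ⋃_{ν<μ} M_ν is a continuous increasing chain of submodules indexed by a limit ordinal μ, with M_0 = 0 and M_{ν+1}/M_ν ≅ B for all ν < μ. Then M is torsion-free and reduced. -/
/-!
A nonzero `m ∈ M` has a least stage containing it; since `A 0 = 0` and the chain is continuous,
that stage is a successor `τ + 1`, so `m` maps to a nonzero element of `A (τ + 1) / A τ ≅ B`.
As `B` is torsion-free, this makes every `A ν` pure in `M` (`r • m ∈ A ν` with `r ≠ 0` forces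
`m ∈ A ν`); purity of `A 0 = 0` is torsion-freeness of `M`. If `f : Q → M` had `f 1 ≠ 0`, entering
at `τ + 1`, purity of `A (τ + 1)` would put all of `f Q` inside it, and as `B` is reduced the
induced map `Q → A (τ + 1) / A τ` vanishes, so `f 1 ∈ A τ`, a contradiction.
-/

open CategoryTheory

universe u

/-- `Ext¹_R(A,B) = 0`, via Mathlib's derived-functor `Ext` for the abelian category of `R`-modules. -/
def Ext1Zero (R : Type u) [Ring R] (A : Type u) [AddCommGroup A] [Module R A]
    (B : Type u) [AddCommGroup B] [Module R B] : Prop :=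
  Subsingleton (((Ext ℤ (ModuleCat.{u} R) 1).obj
    (Opposite.op (ModuleCat.of R A))).obj (ModuleCat.of R B))

open Order

section Chain

variable {R M : Type*} [Ring R] [AddCommGroup M] [Module R M]

theorem Monotone.exists_lt_mem_of_mem_biSup {ι : Type*} [LinearOrder ι] {A : ι → Submodule R M}
    (hA : Monotone A) {σ : ι} {m : M} (hm : m ∈ ⨆ ν < σ, A ν) (hm0 : m ≠ 0) :
    ∃ ν < σ, m ∈ A ν := by
  rw [iSup_subtype'] at hm
  cases isEmpty_or_nonempty {ν // ν < σ}
  · rw [iSup_of_empty, Submodule.mem_bot] at hm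
    exact absurd hm hm0
  · obtain ⟨⟨ν, hν⟩, h⟩ := (Submodule.mem_iSup_of_directed _
      (hA.comp (Subtype.mono_coe _)).directed_le).mp hm
    exact ⟨ν, hν, h⟩

theorem Submodule.mem_of_smul_mem_of_noZeroSMulDivisors_quotient {N P : Submodule R M}
    [NoZeroSMulDivisors R (P ⧸ N.comap P.subtype)] {r : R} (hr : r ≠ 0) {m : M} (hmP : m ∈ P)
    (hrm : r • m ∈ N) : m ∈ N := by
  have h : r • (N.comap P.subtype).mkQ ⟨m, hmP⟩ = 0 := by
    rw [← map_smul, mkQ_apply, Quotient.mk_eq_zero]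
    exact hrm
  simpa [Quotient.mk_eq_zero] using (eq_zero_or_eq_zero_of_smul_eq_zero h).resolve_left hr

variable {A : Ordinal.{u} → Submodule R M} {μ : Ordinal.{u}}

theorem exists_lt_mem_add_one_not_mem (hA : Monotone A) (h0 : A 0 = ⊥)
    (hcont : ∀ σ < μ, IsSuccLimit σ → A σ = ⨆ ν < σ, A ν) {m : M} (hm : m ≠ 0)
    {σ : Ordinal.{u}} (hσ : σ < μ) (hmσ : m ∈ A σ) : ∃ τ < σ, m ∈ A (τ + 1) ∧ m ∉ A τ := by
  induction σ using Ordinal.limitRecOn with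
  | zero => simp_all
  | add_one τ ih =>
    by_cases hmτ : m ∈ A τ
    · obtain ⟨τ', hτ', h⟩ := ih ((lt_add_one τ).trans hσ) hmτ
      exact ⟨τ', hτ'.trans (lt_add_one τ), h⟩
    · exact ⟨τ, lt_add_one τ, hmσ, hmτ⟩
  | limit σ hlim ih =>
    rw [hcont σ hσ hlim] at hmσ
    obtain ⟨ν, hν, hmν⟩ := hA.exists_lt_mem_of_mem_biSup hmσ hm
    obtain ⟨τ, hτ, h⟩ := ih ν hν (hν.trans hσ) hmν
    exact ⟨τ, hτ.trans hν, h⟩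

theorem exists_lt_mem_add_one_not_mem_of_biSup_eq_top (hA : Monotone A) (h0 : A 0 = ⊥)
    (hcont : ∀ σ < μ, IsSuccLimit σ → A σ = ⨆ ν < σ, A ν) (hunion : ⨆ ν < μ, A ν = ⊤)
    {m : M} (hm : m ≠ 0) : ∃ τ < μ, m ∈ A (τ + 1) ∧ m ∉ A τ := by
  obtain ⟨σ, hσ, hmσ⟩ := hA.exists_lt_mem_of_mem_biSup (hunion ▸ Submodule.mem_top) hm
  obtain ⟨τ, hτ, h⟩ := exists_lt_mem_add_one_not_mem hA h0 hcont hm hσ hmσ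
  exact ⟨τ, hτ.trans hσ, h⟩

theorem mem_of_smul_mem_of_chain (hA : Monotone A) (h0 : A 0 = ⊥)
    (hcont : ∀ σ < μ, IsSuccLimit σ → A σ = ⨆ ν < σ, A ν) (hunion : ⨆ ν < μ, A ν = ⊤)
    (htf : ∀ τ < μ, NoZeroSMulDivisors R (A (τ + 1) ⧸ (A τ).comap (A (τ + 1)).subtype))
    {r : R} (hr : r ≠ 0) {m : M} (ν : Ordinal.{u}) (hrm : r • m ∈ A ν) : m ∈ A ν := by
  by_contra hmν
  have hm : m ≠ 0 := by rintro rfl; exact hmν (A ν).zero_mem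
  obtain ⟨τ, hτ, hm1, hmτ⟩ := exists_lt_mem_add_one_not_mem_of_biSup_eq_top hA h0 hcont hunion hm
  have hντ : ν ≤ τ := by
    by_contra! hτν
    exact hmν (hA (add_one_le_of_lt hτν) hm1)
  have := htf τ hτ
  exact hmτ (Submodule.mem_of_smul_mem_of_noZeroSMulDivisors_quotient hr hm1 (hA hντ hrm))

end Chain

section Fraction

variable {R K M : Type*} [CommRing R] [CommRing K] [Algebra R K] [AddCommGroup M] [Module R M]

theorem LinearMap.map_mem_of_map_one_mem [Nontrivial R] [IsFractionRing R K]
    (f : K →ₗ[R] M) {P : Submodule R M} (hP : ∀ r : R, r ≠ 0 → ∀ m, r • m ∈ P → m ∈ P)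
    (h1 : f 1 ∈ P) (q : K) : f q ∈ P := by
  obtain ⟨⟨a, b⟩, rfl⟩ := IsLocalization.mk'_surjective (nonZeroDivisors R) q
  refine hP b (nonZeroDivisors.coe_ne_zero b) _ ?_
  rw [← map_smul, Algebra.smul_def, mul_comm, IsLocalization.mk'_spec,
    Algebra.algebraMap_eq_smul_one, map_smul]
  exact P.smul_mem a h1

theorem LinearMap.map_mem_of_forall_eq_zero_quotient {N P : Submodule R M}
    (hred : ∀ g : K →ₗ[R] (P ⧸ N.comap P.subtype), g = 0) (f : K →ₗ[R] M) (hf : ∀ q, f q ∈ P)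
    (q : K) : f q ∈ N := by
  have := LinearMap.congr_fun (hred ((N.comap P.subtype).mkQ ∘ₗ f.codRestrict P hf)) q
  simpa [Submodule.Quotient.mk_eq_zero] using this

theorem LinearMap.eq_zero_of_chain [Nontrivial R] [IsFractionRing R K]
    {A : Ordinal.{u} → Submodule R M} {μ : Ordinal.{u}} (hA : Monotone A) (h0 : A 0 = ⊥)
    (hcont : ∀ σ < μ, IsSuccLimit σ → A σ = ⨆ ν < σ, A ν) (hunion : ⨆ ν < μ, A ν = ⊤)
    (htf : ∀ τ < μ, NoZeroSMulDivisors R (A (τ + 1) ⧸ (A τ).comap (A (τ + 1)).subtype))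
    (hred : ∀ τ < μ, ∀ g : K →ₗ[R] (A (τ + 1) ⧸ (A τ).comap (A (τ + 1)).subtype), g = 0)
    (f : K →ₗ[R] M) : f = 0 := by
  have hpure : ∀ ν, ∀ r : R, r ≠ 0 → ∀ m, r • m ∈ A ν → m ∈ A ν :=
    fun ν _ hr _ hrm ↦ mem_of_smul_mem_of_chain hA h0 hcont hunion htf hr ν hrm
  have hf1 : f 1 = 0 := by
    by_contra hf1
    obtain ⟨τ, hτ, hf1τ1, hf1τ⟩ :=
      exists_lt_mem_add_one_not_mem_of_biSup_eq_top hA h0 hcont hunion hf1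
    exact hf1τ <| f.map_mem_of_forall_eq_zero_quotient (hred τ hτ)
      (f.map_mem_of_map_one_mem (hpure _) hf1τ1) 1
  ext q
  simpa [h0] using f.map_mem_of_map_one_mem (hpure 0) (by simp [h0, hf1]) q

end Fraction

theorem torsionFree_reduced_of_chain_general (R : Type u) [CommRing R] [IsDomain R]
    (B : Type u) [AddCommGroup B] [Module R B]
    (hBtf : NoZeroSMulDivisors R B)
    (hBred : ∀ f : FractionRing R →ₗ[R] B, f = 0)
    (μ : Ordinal.{u})
    (M : Type u) [AddCommGroup M] [Module R M]
    (A : Ordinal.{u} → Submodule R M) (hmono : Monotone A) (h0 : A 0 = ⊥)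
    (hcont : ∀ σ < μ, Order.IsSuccLimit σ → A σ = ⨆ ν < σ, A ν)
    (hquot : ∀ ν < μ,
      Nonempty ((↥(A (ν + 1)) ⧸ (A ν).comap (A (ν + 1)).subtype) ≃ₗ[R] B))
    (hunion : ⨆ ν < μ, A ν = ⊤) :
    NoZeroSMulDivisors R M ∧ ∀ f : FractionRing R →ₗ[R] M, f = 0 := by
  have htf : ∀ τ < μ, NoZeroSMulDivisors R (A (τ + 1) ⧸ (A τ).comap (A (τ + 1)).subtype) :=
    fun τ hτ ↦ (hquot τ hτ).some.injective.noZeroSMulDivisors _ (map_zero _) (map_smul _)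
  have hred : ∀ τ < μ, ∀ g : FractionRing R →ₗ[R] (A (τ + 1) ⧸ (A τ).comap (A (τ + 1)).subtype),
      g = 0 := fun τ hτ g ↦ by
    let e := (hquot τ hτ).some
    ext q
    simpa using LinearMap.congr_fun (hBred (e.toLinearMap ∘ₗ g)) q
  refine ⟨⟨fun {r m} hrm ↦ or_iff_not_imp_left.2 fun hr ↦ ?_⟩,
    LinearMap.eq_zero_of_chain hmono h0 hcont hunion htf hred⟩
  simpa [h0] using mem_of_smul_mem_of_chain hmono h0 hcont hunion htf hr 0 (by simp [h0, hrm])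

/-- Let `R` be a Dedekind domain whose quotient field is countably generated as an
`R`-module, and `B` a torsion-free reduced module.  If `M` is the union of a continuous
increasing chain of submodules `(A ν)_{ν<μ}` (`μ` a limit ordinal) with `A 0 = 0` and all
successive quotients isomorphic to `B`, then `M` is torsion-free and reduced. -/
theorem torsionFree_reduced_of_chain (R : Type u) [CommRing R] [IsDomain R]
    [IsDedekindDomain R]
    (hQcg : ∃ s : Set (FractionRing R), s.Countable ∧ Submodule.span R s = ⊤)
    (B : Type u) [AddCommGroup B] [Module R B]
    (hBtf : NoZeroSMulDivisors R B)
    (hBred : ∀ f : FractionRing R →ₗ[R] B, f = 0)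
    (μ : Ordinal.{u}) (hμ : Order.IsSuccLimit μ)
    (M : Type u) [AddCommGroup M] [Module R M]
    (A : Ordinal.{u} → Submodule R M) (hmono : Monotone A) (h0 : A 0 = ⊥)
    (hcont : ∀ σ < μ, Order.IsSuccLimit σ → A σ = ⨆ ν < σ, A ν)
    (hquot : ∀ ν < μ,
      Nonempty ((↥(A (ν + 1)) ⧸ (A ν).comap (A (ν + 1)).subtype) ≃ₗ[R] B))
    (hunion : ⨆ ν < μ, A ν = ⊤) :
    NoZeroSMulDivisors R M ∧ ∀ f : FractionRing R →ₗ[R] M, f = 0 :=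
  torsionFree_reduced_of_chain_general R B hBtf hBred μ M A hmono h0 hcont hquot hunion
end

section
/- Let R be a Dedekind domain, p a maximal ideal, and K a module with Ext¹_R(E(R/p), K) = 0 and Ext¹_R(J_p, K) = 0, where J_p is the p-adic completion of a free module over the localization R_p and there is an exact sequence 0 → J_p → Q^{(α)} → I_p → 0 with I_p a direct sum of copies of E(R/p) and α > 0. Then Ext¹_R(Q,K) = 0, i.e. K is cotorsion. -/
/-!
`Ext¹(A, K) = 0` says exactly that `Hom(A, -)` keeps surjective every surjection with kernel `K`:
for a projective resolution `P₂ → P₁ → P₀ → A`, both amount to every map `P₁ → K` killing the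
image of `P₂` extending to `P₀`, the pushout of such a map along `P₁ → P₀` being an extension of
`A` by `K`. This lifting property passes to direct sums, to retracts and to extensions, so it
passes from `E(R/p)` to `I_p`, then together with `J_p` to `Q^{(α)}`, and finally to its summand
`Q`.
-/

open CategoryTheory

universe u

open LinearMap

section Exact

variable {R : Type*} [Ring R] {M N P L : Type*} [AddCommGroup M] [Module R M]
  [AddCommGroup N] [Module R N] [AddCommGroup P] [Module R P] [AddCommGroup L] [Module R L]
  {f : M →ₗ[R] N} {g : N →ₗ[R] P}

theorem Function.Exact.exists_lift (hfg : Function.Exact f g) (hf : Function.Injective f)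
    (h : L →ₗ[R] N) (hh : g ∘ₗ h = 0) : ∃ h' : L →ₗ[R] M, f ∘ₗ h' = h := by
  have hmem (x : L) : h x ∈ range f := (hfg _).1 (LinearMap.congr_fun hh x)
  exact ⟨(LinearEquiv.ofInjective f hf).symm ∘ₗ h.codRestrict _ hmem, by ext x; simp⟩

theorem Function.Exact.exists_desc (hfg : Function.Exact f g) (hg : Function.Surjective g)
    (h : N →ₗ[R] L) (hh : h ∘ₗ f = 0) : ∃ h' : P →ₗ[R] L, h' ∘ₗ g = h := by
  refine ⟨(range f).liftQ h ?_ ∘ₗ (hfg.linearEquivOfSurjective hg).symm.toLinearMap, ?_⟩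
  · rintro - ⟨x, rfl⟩
    exact LinearMap.congr_fun hh x
  · ext x; simp

end Exact

namespace LinearMap

variable {R : Type*} [Ring R] {L K N A : Type*} [AddCommGroup L] [Module R L]
  [AddCommGroup K] [Module R K] [AddCommGroup N] [Module R N] [AddCommGroup A] [Module R A]
  (ψ : L →ₗ[R] K) (d : L →ₗ[R] N)

abbrev Pushout : Type _ := (K × N) ⧸ range (ψ.prod (-d))

namespace Pushout

def inl : K →ₗ[R] Pushout ψ d := (range (ψ.prod (-d))).mkQ ∘ₗ LinearMap.inl R K N

def inr : N →ₗ[R] Pushout ψ d := (range (ψ.prod (-d))).mkQ ∘ₗ LinearMap.inr R K N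

variable {ψ d}

def desc (u : K →ₗ[R] A) (v : N →ₗ[R] A) (h : u ∘ₗ ψ = v ∘ₗ d) : Pushout ψ d →ₗ[R] A :=
  (range (ψ.prod (-d))).liftQ (u.coprod v) <| by
    rintro - ⟨x, rfl⟩
    simpa [add_neg_eq_zero] using LinearMap.congr_fun h x

variable (ψ d) in
theorem inl_comp : inl ψ d ∘ₗ ψ = inr ψ d ∘ₗ d := by
  ext x
  simp only [inl, inr, comp_apply, Submodule.mkQ_apply, coe_inl, coe_inr,
    Submodule.Quotient.eq]
  exact ⟨x, by simp⟩

@[simp]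
theorem desc_inl (u : K →ₗ[R] A) (v : N →ₗ[R] A) (h : u ∘ₗ ψ = v ∘ₗ d) (k : K) :
    desc u v h (inl ψ d k) = u k := by
  simp [desc, inl]

@[simp]
theorem desc_inr (u : K →ₗ[R] A) (v : N →ₗ[R] A) (h : u ∘ₗ ψ = v ∘ₗ d) (n : N) :
    desc u v h (inr ψ d n) = v n := by
  simp [desc, inr]

theorem desc_comp_inl (u : K →ₗ[R] A) (v : N →ₗ[R] A) (h : u ∘ₗ ψ = v ∘ₗ d) :
    desc u v h ∘ₗ inl ψ d = u := by
  ext; simp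

theorem desc_comp_inr (u : K →ₗ[R] A) (v : N →ₗ[R] A) (h : u ∘ₗ ψ = v ∘ₗ d) :
    desc u v h ∘ₗ inr ψ d = v := by
  ext; simp

theorem inl_add_inr_surjective (z : Pushout ψ d) : ∃ k n, inl ψ d k + inr ψ d n = z := by
  obtain ⟨⟨k, n⟩, rfl⟩ := Submodule.Quotient.mk_surjective _ z
  exact ⟨k, n, by simp [inl, inr, ← Submodule.Quotient.mk_add]⟩

theorem inl_injective (h : ker d ≤ ker ψ) : Function.Injective (inl ψ d) := by
  rw [← ker_eq_bot, Submodule.eq_bot_iff]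
  intro k hk
  obtain ⟨x, hx⟩ : (k, (0 : N)) ∈ range (ψ.prod (-d)) := by
    simpa [inl, Submodule.Quotient.mk_eq_zero] using hk
  simp only [prod_apply, Function.prod, neg_apply, Prod.mk.injEq, neg_eq_zero] at hx
  rw [← hx.1]
  exact h hx.2

theorem desc_surjective {u : K →ₗ[R] A} {v : N →ₗ[R] A} (h : u ∘ₗ ψ = v ∘ₗ d)
    (hv : Function.Surjective v) : Function.Surjective (desc u v h) := by
  intro a
  obtain ⟨n, rfl⟩ := hv a
  exact ⟨inr ψ d n, LinearMap.congr_fun (desc_comp_inr u v h) n⟩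

theorem exact_inl_desc_zero {ε : N →ₗ[R] A} (h : 0 ∘ₗ ψ = ε ∘ₗ d)
    (hdε : Function.Exact d ε) : Function.Exact (inl ψ d) (desc 0 ε h) := by
  refine exact_iff.2 (le_antisymm (fun z hz ↦ ?_) ?_)
  · obtain ⟨k, n, rfl⟩ := inl_add_inr_surjective z
    have hn : ε n = 0 := by simpa using hz
    obtain ⟨x, rfl⟩ := (hdε n).1 hn
    exact ⟨k + ψ x, by rw [map_add, ← LinearMap.comp_apply, inl_comp, comp_apply]⟩
  · rw [range_le_ker_iff, desc_comp_inl]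

theorem exact_inl_comp_prod_desc {W B C : Type*} [AddCommGroup W] [Module R W]
    [AddCommGroup B] [Module R B] [AddCommGroup C] [Module R C] {i : W →ₗ[R] K}
    {π : K →ₗ[R] B} {f : N →ₗ[R] B} {q : N →ₗ[R] C} (hf : π ∘ₗ ψ = f ∘ₗ d)
    (hq : 0 ∘ₗ ψ = q ∘ₗ d) (hiπ : Function.Exact i π) (hdq : Function.Exact d q) :
    Function.Exact (inl ψ d ∘ₗ i) ((desc π f hf).prod (desc 0 q hq)) := by
  refine fun z ↦ ⟨fun hz ↦ ?_, ?_⟩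
  · obtain ⟨hπz, hqz⟩ := Prod.ext_iff.1 hz
    obtain ⟨x, rfl⟩ := (exact_inl_desc_zero hq hdq z).1 hqz
    obtain ⟨k, rfl⟩ := (hiπ x).1 (by simpa using hπz)
    exact ⟨k, rfl⟩
  · rintro ⟨k, rfl⟩
    simp [hiπ.apply_apply_eq_zero]

theorem prod_desc_surjective {B C : Type*} [AddCommGroup B] [Module R B] [AddCommGroup C]
    [Module R C] {π : K →ₗ[R] B} {f : N →ₗ[R] B} {q : N →ₗ[R] C} (hf : π ∘ₗ ψ = f ∘ₗ d)
    (hq : 0 ∘ₗ ψ = q ∘ₗ d) (hπ : Function.Surjective π) (hq' : Function.Surjective q) :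
    Function.Surjective ((desc π f hf).prod (desc 0 q hq)) := by
  rintro ⟨b, c⟩
  obtain ⟨z, rfl⟩ := desc_surjective hq hq' c
  obtain ⟨x, hx⟩ := hπ (b - desc π f hf z)
  exact ⟨z + inl ψ d x, by simp [hx]⟩

end Pushout

end LinearMap

def LiftsAlongExtensionsBy (R : Type*) [Ring R] (A K : Type u) [AddCommGroup A] [Module R A]
    [AddCommGroup K] [Module R K] : Prop :=
  ∀ (X B : Type u) [AddCommGroup X] [Module R X] [AddCommGroup B] [Module R B]
    (i : K →ₗ[R] X) (π : X →ₗ[R] B), Function.Injective i → Function.Exact i π →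
      Function.Surjective π → ∀ f : A →ₗ[R] B, ∃ g : A →ₗ[R] X, π ∘ₗ g = f

namespace LiftsAlongExtensionsBy

variable {R : Type*} [Ring R] {A K : Type u} [AddCommGroup A] [Module R A]
  [AddCommGroup K] [Module R K]

theorem of_retract {A' : Type u} [AddCommGroup A'] [Module R A'] (ι : A' →ₗ[R] A)
    (ρ : A →ₗ[R] A') (hρι : ρ ∘ₗ ι = LinearMap.id) (h : LiftsAlongExtensionsBy R A K) :
    LiftsAlongExtensionsBy R A' K := by
  intro X B _ _ _ _ i π hi hiπ hπ f
  obtain ⟨g, hg⟩ := h X B i π hi hiπ hπ (f ∘ₗ ρ)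
  exact ⟨g ∘ₗ ι, by rw [← LinearMap.comp_assoc, hg, LinearMap.comp_assoc, hρι, comp_id]⟩

theorem finsupp (β : Type u) (h : LiftsAlongExtensionsBy R A K) :
    LiftsAlongExtensionsBy R (β →₀ A) K := by
  intro X B _ _ _ _ i π hi hiπ hπ f
  choose g hg using fun b ↦ h X B i π hi hiπ hπ (f ∘ₗ Finsupp.lsingle b)
  refine ⟨Finsupp.lsum ℕ g, Finsupp.lhom_ext fun b a ↦ ?_⟩
  simpa using LinearMap.congr_fun (hg b) a

theorem of_exact {J M C : Type u} [AddCommGroup J] [Module R J] [AddCommGroup M] [Module R M]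
    [AddCommGroup C] [Module R C] {j : J →ₗ[R] M} {q : M →ₗ[R] C} (hj : Function.Injective j)
    (hjq : Function.Exact j q) (hq : Function.Surjective q) (hJ : LiftsAlongExtensionsBy R J K)
    (hC : LiftsAlongExtensionsBy R C K) : LiftsAlongExtensionsBy R M K := by
  intro X B _ _ _ _ i π hi hiπ hπ f
  obtain ⟨g₁, hg₁⟩ := hJ X B i π hi hiπ hπ (f ∘ₗ j)
  -- `inr : M → Pushout g₁ j` lifts `f` along `π'` but need not factor through `X`. The pushout
  -- is an extension of `B × C` by `K`, and subtracting a lift of `C → B × C` makes `inr` vanish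
  -- in `C`, hence factor through `inl : X → Pushout g₁ j`.
  let π' := Pushout.desc (ψ := g₁) (d := j) π f (by rw [hg₁])
  let ρ := Pushout.desc (ψ := g₁) (d := j) 0 q <| by
    rw [zero_comp, hjq.linearMap_comp_eq_zero]
  have hinl : Function.Injective (Pushout.inl g₁ j) :=
    Pushout.inl_injective (by rw [ker_eq_bot.2 hj]; exact bot_le)
  have hρ : Function.Exact (Pushout.inl g₁ j) ρ := Pushout.exact_inl_desc_zero _ hjq
  obtain ⟨t, ht⟩ := hC _ (B × C) _ _ (hinl.comp hi)
    (Pushout.exact_inl_comp_prod_desc _ _ hiπ hjq) (Pushout.prod_desc_surjective _ _ hπ hq)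
    (LinearMap.inr R B C)
  obtain ⟨g, hg⟩ := hρ.exists_lift hinl (Pushout.inr g₁ j - t ∘ₗ q) (by
    have hρt : ρ ∘ₗ t = LinearMap.id := by
      rw [← snd_prod π' ρ, LinearMap.comp_assoc, ht, snd_comp_inr]
    rw [comp_sub, Pushout.desc_comp_inr, ← LinearMap.comp_assoc, hρt, id_comp, sub_self])
  refine ⟨g, ?_⟩
  have hπ't : π' ∘ₗ t = 0 := by rw [← fst_prod π' ρ, LinearMap.comp_assoc, ht, fst_comp_inr]
  calc π ∘ₗ g = π' ∘ₗ Pushout.inl g₁ j ∘ₗ g := by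
        rw [← LinearMap.comp_assoc, Pushout.desc_comp_inl]
    _ = f := by
        rw [hg, comp_sub, Pushout.desc_comp_inr, ← LinearMap.comp_assoc, hπ't, zero_comp,
          sub_zero]

end LiftsAlongExtensionsBy

section Presentation

variable {R : Type*} [Ring R] {A K P₂ P₁ P₀ : Type u} [AddCommGroup A] [Module R A]
  [AddCommGroup K] [Module R K] [AddCommGroup P₂] [Module R P₂]
  [AddCommGroup P₁] [Module R P₁] [AddCommGroup P₀] [Module R P₀]
  {d₂ : P₂ →ₗ[R] P₁} {d₁ : P₁ →ₗ[R] P₀} {ε : P₀ →ₗ[R] A}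

theorem LiftsAlongExtensionsBy.exists_comp_eq (h : LiftsAlongExtensionsBy R A K)
    (h₁ : Function.Exact d₂ d₁) (h₀ : Function.Exact d₁ ε) (hε : Function.Surjective ε)
    (ψ : P₁ →ₗ[R] K) (hψ : ψ ∘ₗ d₂ = 0) : ∃ χ : P₀ →ₗ[R] K, χ ∘ₗ d₁ = ψ := by
  have hker : ker d₁ ≤ ker ψ := by
    intro x hx
    obtain ⟨y, rfl⟩ := (h₁ x).1 hx
    exact LinearMap.congr_fun hψ y
  have hcomm : (0 : K →ₗ[R] A) ∘ₗ ψ = ε ∘ₗ d₁ := by rw [zero_comp, h₀.linearMap_comp_eq_zero]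
  have hinl := Pushout.inl_injective hker
  have hex := Pushout.exact_inl_desc_zero hcomm h₀
  -- The pushout of `ψ` and `d₁` is an extension of `A` by `K`; a splitting `s` of it turns
  -- `inr : P₀ → Pushout ψ d₁` into a map to `K` extending `ψ`.
  obtain ⟨s, hs⟩ := h _ A _ _ hinl hex (Pushout.desc_surjective hcomm hε) LinearMap.id
  obtain ⟨χ, hχ⟩ := hex.exists_lift hinl (Pushout.inr ψ d₁ - s ∘ₗ ε) (by
    rw [comp_sub, Pushout.desc_comp_inr, ← LinearMap.comp_assoc, hs, id_comp, sub_self])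
  refine ⟨χ, (cancel_left hinl).1 ?_⟩
  rw [← LinearMap.comp_assoc, hχ, sub_comp, LinearMap.comp_assoc, h₀.linearMap_comp_eq_zero,
    comp_zero, sub_zero, Pushout.inl_comp]

theorem LiftsAlongExtensionsBy.of_forall_exists_comp_eq [Module.Projective R P₀]
    (hd : d₁ ∘ₗ d₂ = 0) (h₀ : Function.Exact d₁ ε) (hε : Function.Surjective ε)
    (h : ∀ ψ : P₁ →ₗ[R] K, ψ ∘ₗ d₂ = 0 → ∃ χ : P₀ →ₗ[R] K, χ ∘ₗ d₁ = ψ) :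
    LiftsAlongExtensionsBy R A K := by
  intro X B _ _ _ _ i π hi hiπ hπ f
  obtain ⟨g, hg⟩ := Module.projective_lifting_property π (f ∘ₗ ε) hπ
  obtain ⟨ψ, hψ⟩ := hiπ.exists_lift hi (g ∘ₗ d₁) (by
    rw [← LinearMap.comp_assoc, hg, LinearMap.comp_assoc, h₀.linearMap_comp_eq_zero, comp_zero])
  obtain ⟨χ, hχ⟩ := h ψ ((cancel_left hi).1 (by
    rw [← LinearMap.comp_assoc, hψ, LinearMap.comp_assoc, hd, comp_zero, comp_zero]))
  obtain ⟨g', hg'⟩ := h₀.exists_desc hε (g - i ∘ₗ χ) (by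
    rw [sub_comp, LinearMap.comp_assoc, hχ, hψ, sub_self])
  refine ⟨g', (cancel_right hε).1 ?_⟩
  rw [LinearMap.comp_assoc, hg', comp_sub, hg, ← LinearMap.comp_assoc,
    hiπ.linearMap_comp_eq_zero, zero_comp, sub_zero]

end Presentation

theorem CategoryTheory.ProjectiveResolution.subsingleton_ext_one_iff {C : Type*} [Category C]
    [Abelian C] [EnoughProjectives C] {X Y : C} (P : ProjectiveResolution X) :
    Subsingleton (((Ext ℤ C 1).obj (Opposite.op X)).obj Y) ↔
      ∀ ψ : P.complex.X 1 ⟶ Y, P.complex.d 2 1 ≫ ψ = 0 →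
        ∃ χ : P.complex.X 0 ⟶ Y, P.complex.d 1 0 ≫ χ = ψ := by
  rw [← ModuleCat.isZero_iff_subsingleton, (P.isoExt 1 Y).isZero_iff,
    ← HomologicalComplex.exactAt_iff_isZero_homology,
    HomologicalComplex.exactAt_iff' _ 0 1 2 (by simp) (by simp),
    ShortComplex.moduleCat_exact_iff]
  rfl

theorem ext1Zero_iff_liftsAlongExtensionsBy {R : Type u} [Ring R] {A K : Type u}
    [AddCommGroup A] [Module R A] [AddCommGroup K] [Module R K] :
    Ext1Zero R A K ↔ LiftsAlongExtensionsBy R A K := by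
  let P := ProjectiveResolution.of (ModuleCat.of R A)
  have h₁ : Function.Exact (P.complex.d 2 1).hom (P.complex.d 1 0).hom :=
    (ShortComplex.ShortExact.moduleCat_exact_iff_function_exact _).1 (P.exact_succ 0)
  have h₀ : Function.Exact (P.complex.d 1 0).hom (P.π.f 0).hom :=
    (ShortComplex.ShortExact.moduleCat_exact_iff_function_exact _).1 P.exact₀
  have hε : Function.Surjective (P.π.f 0).hom :=
    (ModuleCat.epi_iff_surjective _).1 inferInstance
  have : Module.Projective R (P.complex.X 0) :=
    (IsProjective.iff_projective _).2 (P.projective 0)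
  rw [Ext1Zero, P.subsingleton_ext_one_iff]
  constructor
  · intro h
    refine .of_forall_exists_comp_eq (ModuleCat.hom_ext_iff.1 (P.complex.d_comp_d 2 1 0)) h₀ hε
      fun ψ hψ ↦ ?_
    obtain ⟨χ, hχ⟩ := h (ModuleCat.ofHom ψ) (ModuleCat.hom_ext hψ)
    exact ⟨χ.hom, congrArg ModuleCat.Hom.hom hχ⟩
  · intro h ψ hψ
    obtain ⟨χ, hχ⟩ := h.exists_comp_eq h₁ h₀ hε ψ.hom (congrArg ModuleCat.Hom.hom hψ)
    exact ⟨ModuleCat.ofHom χ, ModuleCat.hom_ext hχ⟩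

theorem cotorsion_of_ext_injHull_adicCompletion_general (R : Type u) [CommRing R]
    (K : Type u) [AddCommGroup K] [Module R K]
    (E : Type u) [AddCommGroup E] [Module R E]
    (J : Type u) [AddCommGroup J] [Module R J]
    -- the exact sequence `0 → J → Q^{(α)} → I_p → 0` with `I_p ≅ ⨁_β E` and `α > 0`:
    (α β : Type u) (hα : Nonempty α)
    (j : J →ₗ[R] (α →₀ FractionRing R)) (hj : Function.Injective j)
    (hcoker : Nonempty (((α →₀ FractionRing R) ⧸ LinearMap.range j) ≃ₗ[R] (β →₀ E)))
    (hE : Ext1Zero R E K) (hJK : Ext1Zero R J K) :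
    Ext1Zero R (FractionRing R) K := by
  simp only [ext1Zero_iff_liftsAlongExtensionsBy] at hE hJK ⊢
  obtain ⟨e⟩ := hcoker
  obtain ⟨a⟩ := hα
  have hI : LiftsAlongExtensionsBy R (β →₀ E) K := hE.finsupp β
  have hC : LiftsAlongExtensionsBy R (_ ⧸ range j) K :=
    hI.of_retract e.toLinearMap e.symm.toLinearMap (by ext; simp)
  have hQα : LiftsAlongExtensionsBy R (α →₀ FractionRing R) K :=
    .of_exact hj j.exact_map_mkQ_range (Submodule.mkQ_surjective _) hJK hC
  exact hQα.of_retract (Finsupp.lsingle a) (Finsupp.lapply a) (by ext; simp)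

/-- Let `R` be Dedekind, `p` maximal, `E = E(R/p)` the injective hull of `R/p`, and
`J_p` the `p`-adic completion of a free module over the localization `R_p`, sitting in
an exact sequence `0 → J_p → Q^{(α)} → I_p → 0` with `I_p` a direct sum of copies of
`E(R/p)` and `α > 0`.  If `Ext¹(E(R/p), K) = 0` and `Ext¹(J_p, K) = 0` then
`Ext¹(Q, K) = 0`, i.e. `K` is cotorsion. -/
theorem cotorsion_of_ext_injHull_adicCompletion (R : Type u) [CommRing R] [IsDomain R]
    [IsDedekindDomain R] (p : Ideal R) [p.IsPrime] (hp : p.IsMaximal)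
    (K : Type u) [AddCommGroup K] [Module R K]
    -- `E` is an injective hull of `R/p`:
    (E : Type u) [AddCommGroup E] [Module R E] (hInj : Module.Injective R E)
    (hEss : ∃ f : (R ⧸ p) →ₗ[R] E, Function.Injective f ∧
      ∀ N : Submodule R E, N ≠ ⊥ → N ⊓ LinearMap.range f ≠ ⊥)
    -- `J_p`, the `p`-adic completion of a free module over the localization at `p`:
    (ι : Type u) (J : Type u) [AddCommGroup J] [Module R J]
    (hJ : Nonempty (J ≃ₗ[R] AdicCompletion p (ι →₀ Localization.AtPrime p)))
    -- the exact sequence `0 → J → Q^{(α)} → I_p → 0` with `I_p ≅ ⨁_β E` and `α > 0`: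
    (α β : Type u) (hα : Nonempty α)
    (j : J →ₗ[R] (α →₀ FractionRing R)) (hj : Function.Injective j)
    (hcoker : Nonempty (((α →₀ FractionRing R) ⧸ LinearMap.range j) ≃ₗ[R] (β →₀ E)))
    (hE : Ext1Zero R E K) (hJK : Ext1Zero R J K) :
    Ext1Zero R (FractionRing R) K :=
  cotorsion_of_ext_injHull_adicCompletion_general R K E J α β hα j hj hcoker hE hJK
end
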